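/- Let M ≥ 3 and K ≥ 2 be integers. Then ∫₀^∞ x⁻¹ f_{M,1,K}(x) dx + ∫₀^∞ x⁻¹ f_{M−1,2,K}(x) dx = α_{M,K} + K α_{M−1,K−1} − (K−1) α_{M−1,K}. -/

import Mathlib

open MeasureTheory ProbabilityTheory Filter

/-- Regularized lower incomplete gamma function `G(M,x) = (1/Γ(M)) ∫₀ˣ e^{-t} t^{M-1} dt`. -/
noncomputable def regGamma (M : ℕ) (x : ℝ) : ℝ :=
  (1 / Real.Gamma M) * ∫ t in (0:ℝ)..x, Real.exp (-t) * t ^ (M - 1)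

/-- Gamma(M,1) density `g(M,x) = e^{-x} x^{M-1} / Γ(M)`. -/
noncomputable def gammaDens (M : ℕ) (x : ℝ) : ℝ :=
  Real.exp (-x) * x ^ (M - 1) / Real.Gamma M

/-- The constant `α_{M,K} = ∫₀^∞ K (e^{-x} x^{M-2} / Γ(M)) G(M,x)^{K-1} dx`. -/
noncomputable def alphaMK (M K : ℕ) : ℝ :=
  ∫ x in Set.Ioi (0:ℝ), K * (Real.exp (-x) * x ^ (M - 2) / Real.Gamma M) * regGamma M x ^ (K - 1)

/-- Density `f_{M,r,K}` of the `r`-th largest among `K` i.i.d. Gamma(M,1) random variables. -/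
noncomputable def fOrd (M r K : ℕ) (x : ℝ) : ℝ :=
  (K.factorial : ℝ) / ((K - r).factorial * (r - 1).factorial) *
    regGamma M x ^ (K - r) * (1 - regGamma M x) ^ (r - 1) * gammaDens M x

/-!
On `(0, ∞)` the function `x⁻¹ f_{M,1,K}(x)` is exactly the integrand of `α_{M,K}`. In
`f_{M-1,2,K} = K (K-1) G^{K-2} (1 - G) g` the factor `1 - G` splits `x⁻¹ f_{M-1,2,K}` into `K`
times the integrand of `α_{M-1,K-1}` minus `K - 1` times that of `α_{M-1,K}`. As `0 ≤ G ≤ 1`,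
every such integrand is dominated by a multiple of `e^{-x} x^{M-2}`, so the integrals split linearly.
-/

open Real Set

lemma integrableOn_exp_neg_mul_pow (n : ℕ) :
    IntegrableOn (fun x : ℝ => exp (-x) * x ^ n) (Ioi 0) :=
  (GammaIntegral_convergent (s := n + 1) (by positivity)).congr_fun
    (fun x _ => by simp [← rpow_natCast]) measurableSet_Ioi

lemma integral_exp_neg_mul_pow (n : ℕ) :
    ∫ x in Ioi (0 : ℝ), exp (-x) * x ^ n = Gamma (n + 1) := by
  rw [Gamma_eq_integral (by positivity)]
  exact setIntegral_congr_fun measurableSet_Ioi fun x _ => by simp [← rpow_natCast]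

lemma continuous_regGamma (M : ℕ) : Continuous (regGamma M) :=
  continuous_const.mul <| intervalIntegral.continuous_primitive
    (fun _ _ => Continuous.intervalIntegrable (by fun_prop) _ _) 0

lemma regGamma_nonneg (M : ℕ) {x : ℝ} (hx : 0 ≤ x) : 0 ≤ regGamma M x :=
  mul_nonneg (one_div_nonneg.2 (Gamma_nonneg_of_nonneg M.cast_nonneg)) <|
    intervalIntegral.integral_nonneg hx fun t ht => by have := ht.1; positivity

lemma regGamma_le_one (M : ℕ) {x : ℝ} (hx : 0 ≤ x) : regGamma M x ≤ 1 := by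
  cases M with
  | zero => simp [regGamma]
  | succ n =>
    have hI : ∫ t in (0 : ℝ)..x, exp (-t) * t ^ n ≤ Gamma (n + 1) := by
      rw [intervalIntegral.integral_of_le hx, ← integral_exp_neg_mul_pow]
      refine setIntegral_mono_set (integrableOn_exp_neg_mul_pow n) ?_
        Ioc_subset_Ioi_self.eventuallyLE
      filter_upwards [ae_restrict_mem measurableSet_Ioi] with t (ht : 0 < t)
      positivity
    simp only [regGamma, Nat.add_sub_cancel, Nat.cast_succ]
    rwa [one_div_mul_eq_div, div_le_one (Gamma_pos_of_pos (by positivity))]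

noncomputable def alphaIntegrand (M K : ℕ) (x : ℝ) : ℝ :=
  K * (exp (-x) * x ^ (M - 2) / Gamma M) * regGamma M x ^ (K - 1)

lemma alphaMK_eq_integral_alphaIntegrand (M K : ℕ) :
    alphaMK M K = ∫ x in Ioi 0, alphaIntegrand M K x :=
  rfl

lemma continuous_alphaIntegrand (M K : ℕ) : Continuous (alphaIntegrand M K) := by
  have := continuous_regGamma M
  unfold alphaIntegrand
  fun_prop

lemma integrableOn_alphaIntegrand (M K : ℕ) : IntegrableOn (alphaIntegrand M K) (Ioi 0) := by
  refine (((integrableOn_exp_neg_mul_pow (M - 2)).div_const (Gamma M)).const_mul K).mono'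
    (continuous_alphaIntegrand M K).aestronglyMeasurable ?_
  refine (ae_restrict_iff' measurableSet_Ioi).2 (Eventually.of_forall fun x (hx : 0 < x) => ?_)
  have hΓ : 0 ≤ Gamma M := Gamma_nonneg_of_nonneg M.cast_nonneg
  have hG := regGamma_nonneg M hx.le
  rw [Real.norm_of_nonneg (by unfold alphaIntegrand; positivity)]
  exact mul_le_of_le_one_right (by positivity) (pow_le_one₀ hG (regGamma_le_one M hx.le))

lemma inv_mul_fOrd_one {M K : ℕ} (hM : 2 ≤ M) (hK : 1 ≤ K) {x : ℝ} (hx : x ≠ 0) :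
    x⁻¹ * fOrd M 1 K x = alphaIntegrand M K x := by
  obtain ⟨m, rfl⟩ := Nat.exists_eq_add_of_le' hM
  obtain ⟨k, rfl⟩ := Nat.exists_eq_add_of_le' hK
  simp only [fOrd, gammaDens, alphaIntegrand, Nat.factorial_succ, Nat.cast_mul, Nat.cast_add,
    Nat.cast_one, add_tsub_cancel_right, tsub_self, Nat.factorial_zero, mul_one, pow_zero,
    Nat.add_one_sub_one, pow_succ, Nat.cast_ofNat]
  field_simp

lemma inv_mul_fOrd_two {M K : ℕ} (hM : 2 ≤ M) (hK : 2 ≤ K) {x : ℝ} (hx : x ≠ 0) :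
    x⁻¹ * fOrd M 2 K x =
      K * alphaIntegrand M (K - 1) x - (K - 1) * alphaIntegrand M K x := by
  obtain ⟨m, rfl⟩ := Nat.exists_eq_add_of_le' hM
  obtain ⟨k, rfl⟩ := Nat.exists_eq_add_of_le' hK
  simp only [fOrd, gammaDens, alphaIntegrand, Nat.factorial_succ, Nat.cast_mul, Nat.cast_add,
    Nat.cast_one, add_tsub_cancel_right, Nat.add_one_sub_one, zero_add, Nat.factorial_zero, mul_one,
    pow_succ, pow_zero, one_mul, Nat.cast_ofNat]
  field_simp
  ring

/-- **Corollary 5 (SUS for 2 users).** Integral identity for the average minimum transmit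
power `p_S(2)` with semi-orthogonal user selection (`M ≥ 3`, `K ≥ 2`):
`∫ x⁻¹ f_{M,1,K} + ∫ x⁻¹ f_{M-1,2,K} = α_{M,K} + K α_{M-1,K-1} - (K-1) α_{M-1,K}`. -/
theorem avg_min_power_SUS_two_users (M K : ℕ) (hM : 3 ≤ M) (hK : 2 ≤ K) :
    (∫ x in Set.Ioi (0:ℝ), x⁻¹ * fOrd M 1 K x) +
      (∫ x in Set.Ioi (0:ℝ), x⁻¹ * fOrd (M - 1) 2 K x)
    = alphaMK M K + (K : ℝ) * alphaMK (M - 1) (K - 1)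
        - ((K : ℝ) - 1) * alphaMK (M - 1) K := by
  have first : ∫ x in Ioi (0 : ℝ), x⁻¹ * fOrd M 1 K x = alphaMK M K := by
    rw [alphaMK_eq_integral_alphaIntegrand]
    exact setIntegral_congr_fun measurableSet_Ioi fun x hx =>
      inv_mul_fOrd_one (by omega) (by omega) hx.ne'
  have second : ∫ x in Ioi (0 : ℝ), x⁻¹ * fOrd (M - 1) 2 K x =
      K * alphaMK (M - 1) (K - 1) - (K - 1) * alphaMK (M - 1) K := by
    rw [setIntegral_congr_fun measurableSet_Ioi fun x hx =>
      inv_mul_fOrd_two (by omega) hK hx.ne',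
      integral_sub ((integrableOn_alphaIntegrand _ _).const_mul _)
        ((integrableOn_alphaIntegrand _ _).const_mul _),
      integral_const_mul, integral_const_mul, alphaMK_eq_integral_alphaIntegrand,
      alphaMK_eq_integral_alphaIntegrand]
  rw [first, second, add_sub_assoc]
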